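/- arXiv:2108.00531 — 2 statements merged into one kernel-verified Lean document; each statement's English description precedes it below -/
import Mathlib

section
/- For a monomial ideal I in K[x,y], the following are equivalent: (1) I satisfies the non-pure dual exchange property; (2) I satisfies the non-pure exchange property; (3) I is componentwise polymatroidal. -/
/-!
In two variables the index `j` in either exchange property is forced to be the variable other
than `i`, and for minimal generators `u i < v i` forces `v j < u j`; so both properties say the
same thing.

Componentwise polymatroidal implies it: raise `u` to degree `deg v` by a power of `x_j` and
exchange inside `I_⟨deg v⟩`. Conversely, for `u, v ∈ I` of degree `d` with `v i < u i`, take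
minimal generators `g ∣ u` and `h ∣ v`. Unless one of them already divides `x_j u / x_i`, the
exchange property applied to `g, h` either yields a divisor of it or shows `x_i v / x_j ∈ I`,
which is closer to `u`; induct on `u i - v i`.
-/

/-- A monomial in `K[x_1,...,x_n]` is identified with its exponent vector. -/
abbrev Mon (n : ℕ) := Fin n → ℕ

/-- Total degree of a monomial. -/
def degree {n : ℕ} (u : Mon n) : ℕ := ∑ i, u i

/-- A monomial ideal is identified with the set of exponent vectors of the monomials it
contains; this set is closed under multiplication by monomials. -/
def IsMonomialIdeal {n : ℕ} (I : Set (Mon n)) : Prop :=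
  ∀ u ∈ I, ∀ w : Mon n, u + w ∈ I

/-- The minimal monomial generating set `G(I)` of a monomial ideal: monomials of `I`
minimal with respect to divisibility (pointwise `≤` of exponent vectors). -/
def minGens {n : ℕ} (I : Set (Mon n)) : Set (Mon n) :=
  {u | u ∈ I ∧ ∀ v ∈ I, v ≤ u → v = u}

/-- `exch v i j` is the exponent vector of `x_j * (v / x_i)` (for `i ≠ j`). -/
def exch {n : ℕ} (v : Mon n) (i j : Fin n) : Mon n :=
  fun k => if k = i then v k - 1 else if k = j then v k + 1 else v k

/-- `component I d` is the ideal `I_⟨d⟩` generated by the degree-`d` monomials of `I`. -/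
def component {n : ℕ} (I : Set (Mon n)) (d : ℕ) : Set (Mon n) :=
  {w | ∃ u ∈ I, degree u = d ∧ u ≤ w}

/-- `I` is generated in a single degree. -/
def GeneratedInSingleDegree {n : ℕ} (I : Set (Mon n)) : Prop :=
  ∃ d, ∀ u ∈ minGens I, degree u = d

/-- A polymatroidal ideal: generated in a single degree and its generators satisfy the
exchange property. -/
def IsPolymatroidal {n : ℕ} (I : Set (Mon n)) : Prop :=
  GeneratedInSingleDegree I ∧
  ∀ u ∈ minGens I, ∀ v ∈ minGens I, ∀ i : Fin n, v i < u i →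
    ∃ j : Fin n, u j < v j ∧ exch u i j ∈ I

/-- Componentwise polymatroidal: each graded component ideal `I_⟨d⟩` is polymatroidal. -/
def ComponentwisePolymatroidal {n : ℕ} (I : Set (Mon n)) : Prop :=
  ∀ d : ℕ, IsPolymatroidal (component I d)

/-- Non-pure dual exchange property: for `u, v ∈ G(I)` with `deg u ≤ deg v` and
`deg_{x_i} v < deg_{x_i} u` there is `j` with `deg_{x_j} v > deg_{x_j} u` and
`x_i * (v / x_j) ∈ I`. -/
def NonPureDualExchange {n : ℕ} (I : Set (Mon n)) : Prop :=
  ∀ u ∈ minGens I, ∀ v ∈ minGens I, degree u ≤ degree v →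
    ∀ i : Fin n, v i < u i → ∃ j : Fin n, u j < v j ∧ exch v j i ∈ I

/-- Non-pure exchange property: for `u, v ∈ G(I)` with `deg u ≤ deg v` and
`deg_{x_i} v > deg_{x_i} u` there is `j` with `deg_{x_j} v < deg_{x_j} u` and
`x_j * (v / x_i) ∈ I`. -/
def NonPureExchange {n : ℕ} (I : Set (Mon n)) : Prop :=
  ∀ u ∈ minGens I, ∀ v ∈ minGens I, degree u ≤ degree v →
    ∀ i : Fin n, u i < v i → ∃ j : Fin n, v j < u j ∧ exch v i j ∈ I

/-- The monomial ideal generated by a set `G` of monomials. -/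
def genBy {n : ℕ} (G : Set (Mon n)) : Set (Mon n) := {w | ∃ u ∈ G, u ≤ w}

/-- The product of two monomial ideals (as sets of monomials). -/
def mulIdeal {n : ℕ} (I J : Set (Mon n)) : Set (Mon n) :=
  {w | ∃ u ∈ I, ∃ v ∈ J, w = u + v}

/-- The product of a monomial ideal with the monomial `u`. -/
def mulMon {n : ℕ} (u : Mon n) (I : Set (Mon n)) : Set (Mon n) :=
  (fun v => u + v) '' I

/-- Strong exchange property: for all generators `u, v` and all `i, j` with
`deg_{x_i} u > deg_{x_i} v` and `deg_{x_j} u < deg_{x_j} v`, `x_j * (u / x_i) ∈ I`. -/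
def StrongExchange {n : ℕ} (I : Set (Mon n)) : Prop :=
  ∀ u ∈ minGens I, ∀ v ∈ minGens I, ∀ i j : Fin n,
    v i < u i → u j < v j → exch u i j ∈ I

/-- The Veronese type ideal `I_{(d; a_1,...,a_n)}`: generated by all monomials of
degree `d` with `deg_{x_i} ≤ a i` for all `i`. -/
def veronese (n d : ℕ) (a : Fin n → ℕ) : Set (Mon n) :=
  {w | ∃ u : Mon n, degree u = d ∧ (∀ i, u i ≤ a i) ∧ u ≤ w}

/-- A list of monomials is an admissible order if each colon ideal
`(u_1,...,u_{i-1}) : u_i` is generated by a subset `S` of the variables. -/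
def AdmissibleOrder {n : ℕ} (L : List (Mon n)) : Prop :=
  ∀ i : Fin L.length, ∃ S : Set (Fin n),
    ∀ w : Mon n, (w + L.get i ∈ genBy {u | u ∈ L.take i.1}) ↔ ∃ k ∈ S, 1 ≤ w k

/-- `I` has linear quotients: some ordering of `G(I)` is admissible. -/
def HasLinearQuotients {n : ℕ} (I : Set (Mon n)) : Prop :=
  ∃ L : List (Mon n), L.Nodup ∧ (∀ u, u ∈ L ↔ u ∈ minGens I) ∧ AdmissibleOrder L

/-- `I` can be extended by linear quotients to `J`: `G(I) ⊆ G(J)` and the elements of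
`G(J) \ G(I)` can be ordered `v_1,...,v_m` such that each colon ideal
`(G(I), v_1,...,v_i) : v_{i+1}` is generated by a subset of the variables. -/
def ExtendsByLinearQuotients {n : ℕ} (I J : Set (Mon n)) : Prop :=
  I ⊆ J ∧ minGens I ⊆ minGens J ∧
  ∃ L : List (Mon n), L.Nodup ∧ (∀ u, u ∈ L ↔ u ∈ minGens J ∧ u ∉ minGens I) ∧
    ∀ i : Fin L.length, ∃ S : Set (Fin n),
      ∀ w : Mon n,
        (w + L.get i ∈ genBy (minGens I ∪ {u | u ∈ L.take i.1})) ↔ ∃ k ∈ S, 1 ≤ w k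

/-- The minimal generators of `I ⊆ K[x,y]` are `u_i = x^{a i} y^{b i}`, `i = 0,...,m`,
with `a` strictly decreasing, `b` strictly increasing, `a m = 0` and `b 0 = 0`
(so `I` is `(x,y)`-primary). -/
def yxTightGens (m : ℕ) (a b : ℕ → ℕ) (I : Set (Mon 2)) : Prop :=
  (∀ i k : ℕ, i ≤ m → k ≤ m → i < k → a k < a i ∧ b i < b k) ∧
  a m = 0 ∧ b 0 = 0 ∧
  minGens I = {u | ∃ i ≤ m, u = ![a i, b i]}

/-- `I` is `x`-tight in `[0, r]`: the `x`-exponents of the generators are exactly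
`r, r-1, ..., 1, 0` (i.e. `a (r - i) = i`). -/
def xTight (I : Set (Mon 2)) (r : ℕ) : Prop :=
  ∃ b : ℕ → ℕ, yxTightGens r (fun i => r - i) b I

/-- `I` is `y`-tight in `[0, s]`: the `y`-exponents of the generators are exactly
`0, 1, ..., s`. -/
def yTight (I : Set (Mon 2)) (s : ℕ) : Prop :=
  ∃ a : ℕ → ℕ, yxTightGens s a (fun i => i) I

/-- `I` is `yx`-tight: there is `0 ≤ j ≤ m` with `b i = i` for `i = 0,...,j` and
`a (m - i) = i` for `i = 0,...,m-j`. -/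
def yxTight (I : Set (Mon 2)) : Prop :=
  ∃ (m : ℕ) (a b : ℕ → ℕ), yxTightGens m a b I ∧
    ∃ j ≤ m, (∀ i ≤ j, b i = i) ∧ ∀ i ≤ m - j, a (m - i) = i

/-- Powers of a monomial ideal. -/
def powIdeal {n : ℕ} (I : Set (Mon n)) : ℕ → Set (Mon n)
  | 0 => Set.univ
  | k + 1 => mulIdeal (powIdeal I k) I

section Monomials

variable {n : ℕ}

lemma degree_add (u w : Mon n) : degree (u + w) = degree u + degree w :=
  Finset.sum_add_distrib

lemma degree_single (j : Fin n) (c : ℕ) : degree (Pi.single j c : Mon n) = c := by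
  simp [degree]

lemma degree_lt_degree {w t : Mon n} (h : w < t) : degree w < degree t := by
  obtain ⟨hle, k, hk⟩ := Pi.lt_def.mp h
  exact Finset.sum_lt_sum (fun k _ => hle k) ⟨k, Finset.mem_univ k, hk⟩

lemma eq_of_le_of_degree_eq {w t : Mon n} (h : w ≤ t) (hd : degree w = degree t) : w = t := by
  by_contra hne
  exact (degree_lt_degree (lt_of_le_of_ne h hne)).ne hd

lemma exch_apply_left (v : Mon n) (i j : Fin n) : exch v i j i = v i - 1 := by
  simp [exch]

lemma exch_apply_right (v : Mon n) {i j : Fin n} (hij : i ≠ j) : exch v i j j = v j + 1 := by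
  simp [exch, hij.symm]

lemma exch_add_single (v : Mon n) {i j : Fin n} (hij : i ≠ j) (hv : 1 ≤ v i) :
    exch v i j + Pi.single i 1 = v + Pi.single j 1 := by
  funext k
  simp only [exch, Pi.add_apply, Pi.single_apply]
  split_ifs <;> subst_vars <;> simp_all

lemma degree_exch (v : Mon n) {i j : Fin n} (hij : i ≠ j) (hv : 1 ≤ v i) :
    degree (exch v i j) = degree v := by
  have h := congrArg degree (exch_add_single v hij hv)
  simp only [degree_add, degree_single] at h
  omega

lemma IsMonomialIdeal.mem_of_le {I : Set (Mon n)} (hI : IsMonomialIdeal I) {z t : Mon n}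
    (hz : z ∈ I) (h : z ≤ t) : t ∈ I := by
  simpa [add_tsub_cancel_of_le h] using hI z hz (t - z)

lemma exists_minGens_le {I : Set (Mon n)} {u : Mon n} (hu : u ∈ I) :
    ∃ g ∈ minGens I, g ≤ u := by
  obtain ⟨g, hgu, hgI, hmin⟩ := exists_minimal_le_of_wellFoundedLT (· ∈ I) u hu
  exact ⟨g, ⟨hgI, fun v hv hvg => le_antisymm hvg (hmin hv hvg)⟩, hgu⟩

lemma exists_lt_of_lt_of_mem_minGens {I : Set (Mon n)} {u v : Mon n} (hu : u ∈ minGens I)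
    (hv : v ∈ minGens I) {i : Fin n} (h : u i < v i) : ∃ k, v k < u k := by
  by_contra! hle
  have huv : u = v := hv.2 u hu.1 hle
  simp [huv] at h

lemma minGens_component (I : Set (Mon n)) (d : ℕ) :
    minGens (component I d) = {u | u ∈ I ∧ degree u = d} := by
  ext u
  constructor
  · rintro ⟨⟨w, hwI, hwd, hwu⟩, hmin⟩
    obtain rfl : w = u := hmin w ⟨w, hwI, hwd, le_rfl⟩ hwu
    exact ⟨hwI, hwd⟩
  · rintro ⟨huI, hud⟩
    refine ⟨⟨u, huI, hud, le_rfl⟩, ?_⟩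
    rintro v ⟨w, hwI, hwd, hwv⟩ hvu
    obtain rfl : w = u := eq_of_le_of_degree_eq (hwv.trans hvu) (hwd.trans hud.symm)
    exact le_antisymm hvu hwv

lemma mem_of_mem_component {I : Set (Mon n)} {d : ℕ} {w : Mon n} (hw : w ∈ component I d)
    (hd : degree w = d) : w ∈ I := by
  obtain ⟨u, hu, hud, hle⟩ := hw
  rwa [← eq_of_le_of_degree_eq hle (hud.trans hd.symm)]

end Monomials

section TwoVariables

variable {i j k : Fin 2}

lemma fin_two_eq_of_ne (hij : i ≠ j) (hki : k ≠ i) : k = j := by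
  omega

lemma degree_eq_add_of_ne (hij : i ≠ j) (w : Mon 2) : degree w = w i + w j := by
  fin_cases i <;> fin_cases j <;> simp_all [degree, Fin.sum_univ_two, add_comm]

lemma le_iff_of_ne (hij : i ≠ j) {w t : Mon 2} : w ≤ t ↔ w i ≤ t i ∧ w j ≤ t j := by
  refine ⟨fun h => ⟨h i, h j⟩, fun ⟨hi, hj⟩ k => ?_⟩
  rcases eq_or_ne k i with rfl | hki
  · exact hi
  · rwa [fin_two_eq_of_ne hij hki]


/-- In two variables both non-pure exchange properties take this form: the variable `j` in them
is forced to be the one other than `i`. -/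
def TwoVarExchange (I : Set (Mon 2)) : Prop :=
  ∀ u ∈ minGens I, ∀ v ∈ minGens I, degree u ≤ degree v →
    ∀ i j : Fin 2, i ≠ j → u i < v i → exch v i j ∈ I

lemma nonPureExchange_iff_twoVarExchange (I : Set (Mon 2)) :
    NonPureExchange I ↔ TwoVarExchange I := by
  constructor
  · intro hE u hu v hv hdeg i j hij hi
    obtain ⟨k, hk, hmem⟩ := hE u hu v hv hdeg i hi
    obtain rfl : k = j := fin_two_eq_of_ne hij (by rintro rfl; omega)
    exact hmem
  · intro hE u hu v hv hdeg i hi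
    obtain ⟨k, hk⟩ := exists_lt_of_lt_of_mem_minGens hu hv hi
    have hki : k ≠ i := by rintro rfl; omega
    exact ⟨k, hk, hE u hu v hv hdeg i k hki.symm hi⟩

lemma nonPureDualExchange_iff_twoVarExchange (I : Set (Mon 2)) :
    NonPureDualExchange I ↔ TwoVarExchange I := by
  constructor
  · intro hD u hu v hv hdeg i j hij hi
    obtain ⟨k, hk⟩ := exists_lt_of_lt_of_mem_minGens hu hv hi
    obtain rfl : k = j := fin_two_eq_of_ne hij (by rintro rfl; omega)
    obtain ⟨l, hl, hmem⟩ := hD u hu v hv hdeg k hk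
    obtain rfl : l = i := fin_two_eq_of_ne hij.symm (by rintro rfl; omega)
    exact hmem
  · intro hE u hu v hv hdeg i hi
    obtain ⟨k, hk⟩ := exists_lt_of_lt_of_mem_minGens hv hu hi
    have hki : k ≠ i := by rintro rfl; omega
    exact ⟨k, hk, hE u hu v hv hdeg k i hki hk⟩

theorem TwoVarExchange.exch_mem {I : Set (Mon 2)} (hI : IsMonomialIdeal I)
    (hE : TwoVarExchange I) (hij : i ≠ j) {u v : Mon 2} (hu : u ∈ I) (hv : v ∈ I)
    (hdeg : degree u = degree v) (hvu : v i < u i) : exch u i j ∈ I := by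
  have hdu := degree_eq_add_of_ne hij u
  have hdv := degree_eq_add_of_ne hij v
  have hle_exch : ∀ {w : Mon 2}, w i + 1 ≤ u i → w j ≤ u j + 1 → w ≤ exch u i j :=
    fun hi hj => (le_iff_of_ne hij).2
      ⟨by rw [exch_apply_left]; omega, by rw [exch_apply_right u hij]; omega⟩
  by_cases hlast : v i + 1 = u i
  · exact hI.mem_of_le hv (hle_exch (by omega) (by omega))
  obtain ⟨g, hg, hgu⟩ := exists_minGens_le hu
  obtain ⟨h, hh, hhv⟩ := exists_minGens_le hv
  rw [le_iff_of_ne hij] at hgu hhv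
  by_cases hgi : g i < u i
  · exact hI.mem_of_le hg.1 (hle_exch (by omega) (by omega))
  by_cases hhj : h j ≤ u j + 1
  · exact hI.mem_of_le hh.1 (hle_exch (by omega) hhj)
  -- Now `g i = u i` and `h j > u j + 1`; exchanging between `g` and `h` either produces a
  -- divisor of `exch u i j` or moves `v` one step towards `u` within degree `degree u`.
  rcases le_total (degree g) (degree h) with hgh | hhg
  · have hv' : exch v j i ∈ I := by
      refine hI.mem_of_le (hE g hg h hh hgh j i hij.symm (by omega))
        ((le_iff_of_ne hij).2 ⟨?_, ?_⟩)
      · rw [exch_apply_right h hij.symm, exch_apply_right v hij.symm]; omega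
      · rw [exch_apply_left, exch_apply_left]; omega
    exact hE.exch_mem hI hij hu hv' (by rw [degree_exch v hij.symm (by omega)]; exact hdeg)
      (by rw [exch_apply_right v hij.symm]; omega)
  · refine hI.mem_of_le (hE h hh g hg hhg i j hij (by omega)) (hle_exch ?_ ?_)
    · rw [exch_apply_left]; omega
    · rw [exch_apply_right g hij]; omega
termination_by u i - v i
decreasing_by rw [exch_apply_right v hij.symm]; omega

lemma componentwisePolymatroidal_of_twoVarExchange {I : Set (Mon 2)} (hI : IsMonomialIdeal I)
    (hE : TwoVarExchange I) : ComponentwisePolymatroidal I := by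
  intro d
  refine ⟨⟨d, fun u hu => ((minGens_component I d).subset hu).2⟩, ?_⟩
  intro u hu v hv i hi
  rw [minGens_component] at hu hv
  obtain ⟨huI, hud⟩ := hu
  obtain ⟨hvI, hvd⟩ := hv
  obtain ⟨j, hji⟩ := exists_ne i
  have hdu := degree_eq_add_of_ne hji.symm u
  have hdv := degree_eq_add_of_ne hji.symm v
  refine ⟨j, by omega, exch u i j, hE.exch_mem hI hji.symm huI hvI (hud.trans hvd.symm) hi,
    ?_, le_rfl⟩
  rw [degree_exch u hji.symm (by omega), hud]

lemma twoVarExchange_of_componentwisePolymatroidal {I : Set (Mon 2)} (hI : IsMonomialIdeal I)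
    (hP : ComponentwisePolymatroidal I) : TwoVarExchange I := by
  intro u hu v hv hdeg i j hij hi
  set d := degree v
  set u' := u + Pi.single j (d - degree u)
  have hu'i : u' i = u i := by simp [u', hij]
  have hu' : u' ∈ minGens (component I d) := by
    rw [minGens_component]
    exact ⟨hI u hu.1 _, by rw [degree_add, degree_single]; omega⟩
  have hv' : v ∈ minGens (component I d) := by
    rw [minGens_component]
    exact ⟨hv.1, rfl⟩
  obtain ⟨k, hk, hmem⟩ := (hP d).2 v hv' u' hu' i (hu'i ▸ hi)
  obtain rfl : k = j := fin_two_eq_of_ne hij (by rintro rfl; omega)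
  exact mem_of_mem_component hmem (degree_exch v hij (by omega))

end TwoVariables

/-- for a monomial ideal in `K[x,y]`, the non-pure dual exchange property,
the non-pure exchange property and being componentwise polymatroidal are equivalent. -/
theorem stmt_5 (I : Set (Mon 2)) (hI : IsMonomialIdeal I) :
    (NonPureDualExchange I ↔ NonPureExchange I) ∧
    (NonPureExchange I ↔ ComponentwisePolymatroidal I) := by
  rw [nonPureDualExchange_iff_twoVarExchange, nonPureExchange_iff_twoVarExchange]
  exact ⟨Iff.rfl, componentwisePolymatroidal_of_twoVarExchange hI,
    twoVarExchange_of_componentwisePolymatroidal hI⟩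
end

section
/- If I is x-tight in [0,r] and J is y-tight in [0,s] in K[x,y], then IJ = y^s·I + x^r·J. -/
/-! Since `I·J` is generated by the products `x^{r-i} y^{b_i} · x^{c_k} y^k` of minimal
generators, it suffices to place each of them in `y^s·I + x^r·J`. Tightness gives the staircases
slope at least one: `b_{i'} + (i - i') ≤ b_i` and `c_k + (k - k') ≤ c_{k'}` for `i' ≤ i`, `k' ≤ k`.
If `i ≤ c_k`, the product is `x^r` times `x^{c_k - i} y^{b_i + k}`, which lies in `J` via the
generator of index `min (k + i) s`. Otherwise `s - k ≤ c_k < i ≤ b_i`, so the product is `y^s`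
times `x^{r - i + c_k} y^{b_i + k - s}`, which lies in `I` via the generator of index `i - c_k`. -/

lemma exists_mem_minGens_le {n : ℕ} {I : Set (Mon n)} {u : Mon n} (hu : u ∈ I) :
    ∃ g ∈ minGens I, g ≤ u := by
  obtain ⟨g, hgu, hg⟩ := exists_minimal_le_of_wellFoundedLT (· ∈ I) u hu
  exact ⟨g, ⟨hg.prop, fun _ hv hvg => hg.eq_of_le hv hvg⟩, hgu⟩

lemma IsMonomialIdeal.isUpperSet {n : ℕ} {I : Set (Mon n)} (hI : IsMonomialIdeal I) :
    IsUpperSet I := fun u w huw hu => by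
  simpa [add_tsub_cancel_of_le huw] using hI u hu (w - u)

lemma IsUpperSet.mulMon {n : ℕ} {I : Set (Mon n)} (hI : IsUpperSet I) (u : Mon n) :
    IsUpperSet (mulMon u I) := by
  rintro _ w hle ⟨v, hv, rfl⟩
  exact ⟨w - u, hI (le_tsub_of_add_le_left hle) hv, add_tsub_cancel_of_le (le_of_add_le_left hle)⟩

lemma mulIdeal_subset_of_minGens {n : ℕ} {I J K : Set (Mon n)} (hK : IsUpperSet K)
    (h : ∀ g ∈ minGens I, ∀ g' ∈ minGens J, g + g' ∈ K) : mulIdeal I J ⊆ K := by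
  rintro _ ⟨u, hu, v, hv, rfl⟩
  obtain ⟨g, hg, hgu⟩ := exists_mem_minGens_le hu
  obtain ⟨g', hg', hgv⟩ := exists_mem_minGens_le hv
  exact hK (add_le_add hgu hgv) (h g hg g' hg')

lemma StrictMonoOn.add_sub_le_nat {f : ℕ → ℕ} {m i k : ℕ} (hf : StrictMonoOn f (Set.Iic m))
    (hik : i ≤ k) (hkm : k ≤ m) : f i + (k - i) ≤ f k := by
  induction k, hik using Nat.le_induction with
  | base => simp
  | succ k hik ih =>
    have hstep := hf (show k ≤ m by omega) hkm (Nat.lt_succ_self k)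
    have := ih (by omega)
    omega

lemma StrictAntiOn.add_sub_le_nat {f : ℕ → ℕ} {m i k : ℕ} (hf : StrictAntiOn f (Set.Iic m))
    (hik : i ≤ k) (hkm : k ≤ m) : f k + (k - i) ≤ f i := by
  induction k, hik using Nat.le_induction with
  | base => simp
  | succ k hik ih =>
    have hstep := hf (show k ≤ m by omega) hkm (Nat.lt_succ_self k)
    have := ih (by omega)
    omega

namespace yxTightGens

variable {m : ℕ} {a b : ℕ → ℕ} {I : Set (Mon 2)}

lemma strictAntiOn (h : yxTightGens m a b I) : StrictAntiOn a (Set.Iic m) :=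
  fun i hi k hk hik => (h.1 i k hi hk hik).1

lemma strictMonoOn (h : yxTightGens m a b I) : StrictMonoOn b (Set.Iic m) :=
  fun i hi k hk hik => (h.1 i k hi hk hik).2

lemma exists_eq_of_mem_minGens (h : yxTightGens m a b I) {u : Mon 2} (hu : u ∈ minGens I) :
    ∃ i ≤ m, u = ![a i, b i] := by
  rwa [h.2.2.2] at hu

lemma gen_mem (h : yxTightGens m a b I) {i : ℕ} (hi : i ≤ m) : ![a i, b i] ∈ I := by
  have hgen : ![a i, b i] ∈ minGens I := by
    rw [h.2.2.2]
    exact ⟨i, hi, rfl⟩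
  exact hgen.1

lemma mem_of_le_gen (h : yxTightGens m a b I) (hI : IsMonomialIdeal I) {i : ℕ} (hi : i ≤ m)
    {w : Mon 2} (h0 : a i ≤ w 0) (h1 : b i ≤ w 1) : w ∈ I :=
  hI.isUpperSet (by simp [Pi.le_def, Fin.forall_fin_two, h0, h1]) (h.gen_mem hi)

end yxTightGens

lemma gen_add_gen_mem_of_tight {I J : Set (Mon 2)} (hI : IsMonomialIdeal I)
    (hJ : IsMonomialIdeal J) {r s : ℕ} {b c : ℕ → ℕ}
    (hIg : yxTightGens r (fun i => r - i) b I) (hJg : yxTightGens s c (fun k => k) J)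
    {i k : ℕ} (hi : i ≤ r) (hk : k ≤ s) :
    ![r - i, b i] + ![c k, k] ∈ mulMon ![0, s] I ∪ mulMon ![r, 0] J := by
  have hb0 : b 0 = 0 := hIg.2.2.1
  have hcs : c s = 0 := hJg.2.1
  have hib : i ≤ b i := by simpa [hb0] using hIg.strictMonoOn.add_sub_le_nat (Nat.zero_le i) hi
  have hkc : s - k ≤ c k := by simpa [hcs] using hJg.strictAntiOn.add_sub_le_nat hk le_rfl
  by_cases hic : i ≤ c k
  · right
    refine ⟨![c k - i, b i + k], ?_, by simp; omega⟩
    rcases le_or_gt (k + i) s with hki | hki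
    · have := hJg.strictAntiOn.add_sub_le_nat (Nat.le_add_right k i) hki
      exact hJg.mem_of_le_gen hJ hki (by simp; omega) (by simp; omega)
    · exact hJg.mem_of_le_gen hJ le_rfl (by simp [hcs]) (by simp; omega)
  · left
    have := hIg.strictMonoOn.add_sub_le_nat (Nat.sub_le i (c k)) hi
    refine ⟨![r - i + c k, b i + k - s], ?_, by simp; omega⟩
    exact hIg.mem_of_le_gen hI (i := i - c k) (by omega) (by simp; omega) (by simp; omega)

/-- if `I` is `x`-tight in `[0,r]` and `J` is `y`-tight in `[0,s]`, then
`I·J = y^s·I + x^r·J`. -/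
theorem stmt_10 (I J : Set (Mon 2)) (hI : IsMonomialIdeal I) (hJ : IsMonomialIdeal J)
    (r s : ℕ) (hx : xTight I r) (hy : yTight J s) :
    mulIdeal I J = mulMon ![0, s] I ∪ mulMon ![r, 0] J := by
  obtain ⟨b, hIg⟩ := hx
  obtain ⟨c, hJg⟩ := hy
  refine Set.Subset.antisymm (mulIdeal_subset_of_minGens ?_ ?_) ?_
  · exact (hI.isUpperSet.mulMon _).union (hJ.isUpperSet.mulMon _)
  · intro g hg g' hg'
    obtain ⟨i, hi, rfl⟩ := hIg.exists_eq_of_mem_minGens hg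
    obtain ⟨k, hk, rfl⟩ := hJg.exists_eq_of_mem_minGens hg'
    exact gen_add_gen_mem_of_tight hI hJ hIg hJg hi hk
  · have hys : ![0, s] ∈ J := by simpa [hJg.2.1] using hJg.gen_mem le_rfl
    have hxr : ![r, 0] ∈ I := by simpa [hIg.2.2.1] using hIg.gen_mem (Nat.zero_le r)
    rintro _ (⟨u, hu, rfl⟩ | ⟨v, hv, rfl⟩)
    · exact ⟨u, hu, ![0, s], hys, add_comm _ _⟩
    · exact ⟨![r, 0], hxr, v, hv, rfl⟩
end
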